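/- If a family of nonnegative random variables S_η satisfies E[S_η] = 1/μ for all η and, for all x ≥ x₀ (some x₀ > 0), P(S_η > x) → 0 and E[S_η·1{S_η ≤ x}] → 0 as η → η*, then E[S_η²] → +∞ as η → η*. -/

import Mathlib

/-!
On `{S > x}` we have `x * S ≤ S²`, so `E[S²] ≥ x * E[S; S > x] = x * (E[S] - E[S; S ≤ x])`,
and the right-hand side tends to `x / μ`. Since `x` may be taken arbitrarily large, the second
moment exceeds every bound near `η*`.
-/

open MeasureTheory ProbabilityTheory Set Filter

namespace MeasureTheory

variable {α : Type*} [MeasurableSpace α] {μ : Measure α} {f : α → ℝ}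

theorem setIntegral_lt_eq_integral_sub_setIntegral_le (hf : Integrable f μ) (x : ℝ) :
    ∫ ω in {ω | x < f ω}, f ω ∂μ = ∫ ω, f ω ∂μ - ∫ ω in {ω | f ω ≤ x}, f ω ∂μ := by
  have hcompl : {ω | x < f ω} = {ω | f ω ≤ x}ᶜ := by
    ext ω
    simp only [mem_ofPred_eq, mem_compl_iff, not_le]
  rw [hcompl, setIntegral_compl₀ (nullMeasurableSet_le hf.aemeasurable aemeasurable_const) hf]

theorem ofReal_mul_setIntegral_lt_le_lintegral_sq (hf : Integrable f μ) {x : ℝ} (hx : 0 ≤ x) :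
    ENNReal.ofReal (x * ∫ ω in {ω | x < f ω}, f ω ∂μ) ≤ ∫⁻ ω, ENNReal.ofReal (f ω ^ 2) ∂μ := by
  have hA : ∀ᵐ ω ∂μ.restrict {ω | x < f ω}, x < f ω :=
    ae_restrict_mem₀ (nullMeasurableSet_lt aemeasurable_const hf.aemeasurable)
  calc ENNReal.ofReal (x * ∫ ω in {ω | x < f ω}, f ω ∂μ)
      = ENNReal.ofReal (∫ ω in {ω | x < f ω}, x * f ω ∂μ) := by rw [integral_const_mul]
    _ = ∫⁻ ω in {ω | x < f ω}, ENNReal.ofReal (x * f ω) ∂μ :=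
        ofReal_integral_eq_lintegral_ofReal (hf.const_mul x).integrableOn
          (hA.mono fun ω hω => mul_nonneg hx (hx.trans hω.le))
    _ ≤ ∫⁻ ω in {ω | x < f ω}, ENNReal.ofReal (f ω ^ 2) ∂μ :=
        lintegral_mono_ae <| hA.mono fun ω hω => ENNReal.ofReal_le_ofReal (by nlinarith)
    _ ≤ ∫⁻ ω, ENNReal.ofReal (f ω ^ 2) ∂μ := setLIntegral_le_lintegral _ _

theorem tendsto_setIntegral_lt_of_tendsto_setIntegral_le {ι : Type*} {l : Filter ι}
    {F : ι → α → ℝ} (hF : ∀ i, Integrable (F i) μ) {c : ℝ} (hmean : ∀ i, ∫ ω, F i ω ∂μ = c)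
    {x : ℝ} (htrunc : Tendsto (fun i => ∫ ω in {ω | F i ω ≤ x}, F i ω ∂μ) l (nhds 0)) :
    Tendsto (fun i => ∫ ω in {ω | x < F i ω}, F i ω ∂μ) l (nhds c) := by
  simpa only [setIntegral_lt_eq_integral_sub_setIntegral_le (hF _), hmean, sub_zero]
    using tendsto_const_nhds.sub htrunc

end MeasureTheory

theorem second_moment_tendsto_top_general {Ω : Type*} [MeasureSpace Ω]
    {ι : Type*} [TopologicalSpace ι] (ηstar : ι)
    (m : ℝ) (hm : 0 < m)
    (S : ι → Ω → ℝ)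
    (hint : ∀ η, Integrable (S η) (ℙ : Measure Ω))
    (hmean : ∀ η, ∫ ω, S η ω ∂(ℙ : Measure Ω) = 1 / m)
    (x₀ : ℝ)
    (htrunc : ∀ x, x₀ ≤ x →
      Tendsto (fun η => ∫ ω in {ω : Ω | S η ω ≤ x}, S η ω ∂(ℙ : Measure Ω))
        (nhdsWithin ηstar {ηstar}ᶜ) (nhds 0)) :
    Tendsto (fun η => ∫⁻ ω, ENNReal.ofReal ((S η ω) ^ 2) ∂(ℙ : Measure Ω))
      (nhdsWithin ηstar {ηstar}ᶜ) (nhds ⊤) := by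
  rw [ENNReal.tendsto_nhds_top_iff_nat]
  intro n
  set x := max x₀ ((n + 1) * m)
  have hx₀x : x₀ ≤ x := le_max_left _ _
  have hnx : (n + 1) * m ≤ x := le_max_right _ _
  have hx : 0 < x := lt_of_lt_of_le (by positivity) hnx
  have hn : (n : ℝ) < x * (1 / m) := by
    rw [mul_one_div, lt_div_iff₀ hm]
    nlinarith
  have hlim := (tendsto_setIntegral_lt_of_tendsto_setIntegral_le hint hmean
    (htrunc x hx₀x)).const_mul x
  filter_upwards [hlim.eventually_const_lt hn] with η hη
  calc (n : ENNReal) = ENNReal.ofReal n := (ENNReal.ofReal_natCast n).symm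
    _ < ENNReal.ofReal (x * ∫ ω in {ω | x < S η ω}, S η ω ∂ℙ) :=
        (ENNReal.ofReal_lt_ofReal_iff (n.cast_nonneg.trans_lt hη)).mpr hη
    _ ≤ _ := ofReal_mul_setIntegral_lt_le_lintegral_sq (hint η) hx.le

/-- If a family of nonnegative random variables `S_η` has
`E[S_η] = 1/μ` and, for all `x ≥ x₀` (some `x₀ > 0`), `P(S_η > x) → 0` and
`E[S_η·1{S_η ≤ x}] → 0` as `η → η*`, then `E[S_η²] → +∞` as `η → η*`. -/
theorem second_moment_tendsto_top {Ω : Type*} [MeasureSpace Ω]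
    [IsProbabilityMeasure (ℙ : Measure Ω)]
    {ι : Type*} [TopologicalSpace ι] (ηstar : ι)
    (m : ℝ) (hm : 0 < m)
    (S : ι → Ω → ℝ)
    (hmeas : ∀ η, Measurable (S η))
    (hnonneg : ∀ η ω, 0 ≤ S η ω)
    (hint : ∀ η, Integrable (S η) (ℙ : Measure Ω))
    (hmean : ∀ η, ∫ ω, S η ω ∂(ℙ : Measure Ω) = 1 / m)
    (x₀ : ℝ) (hx₀ : 0 < x₀)
    (htail : ∀ x, x₀ ≤ x →
      Tendsto (fun η => ((ℙ : Measure Ω) {ω : Ω | x < S η ω}).toReal)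
        (nhdsWithin ηstar {ηstar}ᶜ) (nhds 0))
    (htrunc : ∀ x, x₀ ≤ x →
      Tendsto (fun η => ∫ ω in {ω : Ω | S η ω ≤ x}, S η ω ∂(ℙ : Measure Ω))
        (nhdsWithin ηstar {ηstar}ᶜ) (nhds 0)) :
    Tendsto (fun η => ∫⁻ ω, ENNReal.ofReal ((S η ω) ^ 2) ∂(ℙ : Measure Ω))
      (nhdsWithin ηstar {ηstar}ᶜ) (nhds ⊤) :=
  second_moment_tendsto_top_general ηstar m hm S hint hmean x₀ htrunc
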